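/- arXiv:2107.14022 — 3 statements merged into one kernel-verified Lean document; each statement's English description precedes it below -/
import Mathlib

section
/- Let A be a finite alphabet. If Ann has a winning strategy for the hard game over A, then Ann has a winning strategy for the erase-repetition game over A. -/
open scoped Classical

/-- A word is square-free if none of its factors is a square `u ++ u` with `u` nonempty. -/
def SquareFree {A : Type*} (w : List A) : Prop :=
  ∀ u : List A, u ≠ [] → ¬ (u ++ u) <:+: w

/-- The play of the hard game over the alphabet `A`: starting from the empty word,
Ann (strategy `ψ : List A → A`) and Ben (strategy `φ : List A → Option A`, where
`none` means that Ben skips his turn) alternately move, Ann moving first. -/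
def playH {A : Type*} (ψ : List A → A) (φ : List A → Option A) : ℕ → List A
  | 0 => []
  | k + 1 =>
      let w := playH ψ φ k
      if Even k then w ++ [ψ w] else w ++ (φ w).toList

/-- If the word `w` has a suffix that is a square `u ++ u` (with `u` nonempty), erase
the second half `u` of the shortest such square suffix; otherwise do nothing. -/
noncomputable def eraseStep {A : Type*} (w : List A) : List A :=
  if h : ∃ n, 0 < n ∧ ∃ u : List A, u.length = n ∧ (u ++ u) <:+ w then
    w.take (w.length - Nat.find h)
  else w

/-- Repeatedly erase the second half of the shortest square suffix, until no suffix of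
the word is a square. -/
noncomputable def reduce {A : Type*} (w : List A) : List A := eraseStep^[w.length] w

/-- The play of the erase-repetition game over the alphabet `A`: Ann (strategy `ψ`)
and Ben (strategy `φ`) alternately append a letter, Ann moving first; after each move
the word is reduced by repeatedly erasing the second half of the shortest square
suffix. -/
noncomputable def playER {A : Type*} (ψ φ : List A → A) : ℕ → List A
  | 0 => []
  | k + 1 =>
      let w := playER ψ φ k
      reduce (w ++ [if Even k then ψ w else φ w])

namespace Stmt4Aux

variable {A : Type*}

lemma squareFree_of_infix {w v : List A} (h : SquareFree w) (hv : v <:+: w) : SquareFree v :=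
  fun u hu hinf => h u hu (hinf.trans hv)

lemma eraseStep_of_squareFree {w : List A} (h : SquareFree w) : eraseStep w = w := by
  rw [eraseStep, dif_neg]
  rintro ⟨n, hn, u, hu, hsuf⟩
  exact h u (by rintro rfl; simp at hu; omega) hsuf.isInfix

lemma reduce_of_squareFree {w : List A} (h : SquareFree w) : reduce w = w :=
  Function.iterate_fixed (eraseStep_of_squareFree h) w.length

lemma reduce_concat_concat {w : List A} {b : A} (h : SquareFree (w ++ [b])) :
    reduce ((w ++ [b]) ++ [b]) = w ++ [b] := by
  have hsuf : ([b] ++ [b] : List A) <:+ (w ++ [b]) ++ [b] := by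
    rw [List.append_assoc]; exact List.suffix_append w ([b] ++ [b])
  have hex : ∃ n, 0 < n ∧ ∃ u : List A, u.length = n ∧ (u ++ u) <:+ (w ++ [b]) ++ [b] :=
    ⟨1, one_pos, [b], rfl, hsuf⟩
  have hfind : Nat.find hex = 1 := by
    rw [Nat.find_eq_iff]
    exact ⟨⟨one_pos, [b], rfl, hsuf⟩, by rintro k hk ⟨h0, _⟩; omega⟩
  have hstep : eraseStep ((w ++ [b]) ++ [b]) = w ++ [b] := by
    rw [eraseStep, dif_pos hex, hfind]
    have hlen : ((w ++ [b]) ++ [b]).length - 1 = (w ++ [b]).length := by simp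
    rw [hlen, List.take_left]
  have hlen2 : ((w ++ [b]) ++ [b]).length = (w ++ [b]).length + 1 := by simp
  rw [reduce, hlen2, Function.iterate_succ_apply, hstep,
    Function.iterate_fixed (eraseStep_of_squareFree h)]

noncomputable def run (ψ : List A → A) : List (Option A) → List A
  | [] => []
  | c :: cs => (run ψ cs ++ [ψ (run ψ cs)]) ++ c.toList

inductive Valid (ψ : List A → A) : List (Option A) → Prop
  | nil : Valid ψ []
  | cons {c : Option A} {cs : List (Option A)} : Valid ψ cs →
      c ≠ some (ψ (run ψ cs)) → Valid ψ (c :: cs)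

noncomputable def mkφ (ψ : List A → A) : List (Option A) → List A → Option A
  | [], _ => none
  | c :: cs, v => if v = run ψ cs ++ [ψ (run ψ cs)] then c else mkφ ψ cs v

lemma run_length_cons (ψ : List A → A) (c : Option A) (cs : List (Option A)) :
    (run ψ (c :: cs)).length = (run ψ cs).length + 1 + c.toList.length := by
  simp [run]; omega

lemma run_length_mono (ψ : List A → A) {s t : List (Option A)} (h : s <:+ t) :
    (run ψ s).length ≤ (run ψ t).length := by
  induction t with
  | nil => rw [List.suffix_nil.mp h]
  | cons d t ih =>
    rcases List.suffix_cons_iff.mp h with rfl | h'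
    · exact le_rfl
    · exact (ih h').trans (by rw [run_length_cons]; omega)

lemma mkφ_eq (ψ : List A → A) (l : List (Option A)) (cs' : List (Option A)) (c : Option A) :
    mkφ ψ (l ++ c :: cs') (run ψ cs' ++ [ψ (run ψ cs')]) = c := by
  induction l with
  | nil => simp [mkφ]
  | cons d l ih =>
    rw [List.cons_append, mkφ, if_neg, ih]
    intro h
    have h1 := congrArg List.length h
    simp only [List.length_append, List.length_singleton] at h1
    have h2 : (run ψ (c :: cs')).length ≤ (run ψ (l ++ c :: cs')).length :=
      run_length_mono ψ (List.suffix_append l (c :: cs'))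
    rw [run_length_cons] at h2
    omega

lemma mkφ_legal {ψ : List A → A} {CS : List (Option A)} (h : Valid ψ CS) :
    ∀ v : List A, v ≠ [] → mkφ ψ CS v ≠ v.getLast? := by
  induction h with
  | nil =>
    intro v hv
    rw [mkφ]
    intro e
    exact hv (List.getLast?_eq_none_iff.mp e.symm)
  | @cons c cs _ hc ih =>
    intro v hv
    rw [mkφ]
    split
    · next heq =>
      rw [heq, List.getLast?_concat]
      exact hc
    · exact ih v hv

lemma play_eq {ψ : List A → A} {CS : List (Option A)} (h : Valid ψ CS) :
    ∀ i ≤ CS.length, playH ψ (mkφ ψ CS) (2 * i) = run ψ (CS.drop (CS.length - i)) := by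
  intro i
  induction i with
  | zero => simp [playH, run, List.drop_length]
  | succ i ih =>
    intro hi
    have hplay := ih (Nat.le_of_succ_le hi)
    have hm : CS.length - (i + 1) < CS.length := by omega
    have harith : CS.length - (i + 1) + 1 = CS.length - i := by omega
    have hdrop : CS.drop (CS.length - (i + 1)) =
        CS[CS.length - (i + 1)] :: CS.drop (CS.length - i) := by
      rw [List.drop_eq_getElem_cons hm, harith]
    have hCS : CS = CS.take (CS.length - (i + 1)) ++
        CS[CS.length - (i + 1)] :: CS.drop (CS.length - i) := by
      conv_lhs => rw [← List.take_append_drop (CS.length - (i + 1)) CS]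
      rw [hdrop]
    have h1 : playH ψ (mkφ ψ CS) (2 * i + 1) =
        run ψ (CS.drop (CS.length - i)) ++ [ψ (run ψ (CS.drop (CS.length - i)))] := by
      rw [playH]
      simp only [hplay]
      rw [if_pos ⟨i, two_mul i⟩]
    have hφ : mkφ ψ CS (playH ψ (mkφ ψ CS) (2 * i + 1)) = CS[CS.length - (i + 1)] := by
      rw [h1]
      have hkey := mkφ_eq ψ (CS.take (CS.length - (i + 1))) (CS.drop (CS.length - i))
        CS[CS.length - (i + 1)]
      rwa [← hCS] at hkey
    have h2 : 2 * (i + 1) = (2 * i + 1) + 1 := by ring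
    rw [h2, playH]
    rw [if_neg (by rw [Nat.even_iff]; omega), hφ, h1, hdrop, run, List.append_assoc]

lemma sfR {ψ : List A → A}
    (H : ∀ φ : List A → Option A, (∀ v : List A, v ≠ [] → φ v ≠ v.getLast?) →
      ∀ k : ℕ, SquareFree (playH ψ φ k))
    {cs : List (Option A)} (h : Valid ψ cs) :
    SquareFree (run ψ cs ++ [ψ (run ψ cs)]) := by
  have hp := play_eq h cs.length le_rfl
  rw [Nat.sub_self, List.drop_zero] at hp
  have hsf := H (mkφ ψ cs) (mkφ_legal h) (2 * cs.length + 1)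
  rw [playH] at hsf
  simp only [hp] at hsf
  rwa [if_pos ⟨cs.length, two_mul cs.length⟩] at hsf

end Stmt4Aux

open Stmt4Aux

/-- Over a finite alphabet, if Ann has a winning strategy for the hard game then she
has a winning strategy for the erase-repetition game. -/
theorem stmt_4 (A : Type*) [Fintype A]
    (hard : ∃ ψ : List A → A, ∀ φ : List A → Option A,
      (∀ v : List A, v ≠ [] → φ v ≠ v.getLast?) →
      ∀ k : ℕ, SquareFree (playH ψ φ k)) :
    ∃ ψ : List A → A, ∀ φ : List A → A, ∀ N : ℕ, ∃ k : ℕ,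
      N ≤ (playER ψ φ k).length := by
  obtain ⟨ψ, H⟩ := hard
  refine ⟨ψ, fun φ N => ⟨2 * N, ?_⟩⟩
  suffices h : ∀ j : ℕ, (∃ cs, Valid ψ cs ∧ run ψ cs = playER ψ φ (2 * j)) ∧
      j ≤ (playER ψ φ (2 * j)).length from (h N).2
  intro j
  induction j with
  | zero => exact ⟨⟨[], Valid.nil, rfl⟩, by simp [playER]⟩
  | succ j ih =>
    obtain ⟨⟨cs, hV, hrun⟩, hlen⟩ := ih
    set w := playER ψ φ (2 * j) with hw
    have hsf : SquareFree (w ++ [ψ w]) := by rw [← hrun]; exact sfR H hV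
    have hstep1 : playER ψ φ (2 * j + 1) = w ++ [ψ w] := by
      rw [playER]
      simp only [← hw]
      rw [if_pos ⟨j, two_mul j⟩, reduce_of_squareFree hsf]
    have h2 : 2 * (j + 1) = (2 * j + 1) + 1 := by ring
    by_cases hb : φ (w ++ [ψ w]) = ψ w
    · have hfin : playER ψ φ (2 * (j + 1)) = w ++ [ψ w] := by
        rw [h2, playER]
        simp only [hstep1]
        rw [if_neg (by rw [Nat.even_iff]; omega), hb]
        exact reduce_concat_concat hsf
      refine ⟨⟨none :: cs, Valid.cons hV (by simp), ?_⟩, ?_⟩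
      · rw [hfin]; simp [run, hrun]
      · rw [hfin]; simp only [List.length_append, List.length_singleton]
        have : j ≤ w.length := hlen
        omega
    · have hV' : Valid ψ (some (φ (w ++ [ψ w])) :: cs) :=
        Valid.cons hV (by rw [hrun]; simpa using hb)
      have hrun' : run ψ (some (φ (w ++ [ψ w])) :: cs) = (w ++ [ψ w]) ++ [φ (w ++ [ψ w])] := by
        simp [run, hrun]
      have hsf2 : SquareFree ((w ++ [ψ w]) ++ [φ (w ++ [ψ w])]) := by
        refine squareFree_of_infix (sfR H hV') ?_
        rw [hrun']
        exact (List.prefix_append _ _).isInfix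
      have hfin : playER ψ φ (2 * (j + 1)) = (w ++ [ψ w]) ++ [φ (w ++ [ψ w])] := by
        rw [h2, playER]
        simp only [hstep1]
        rw [if_neg (by rw [Nat.even_iff]; omega), reduce_of_squareFree hsf2]
      refine ⟨⟨_, hV', by rw [hfin, hrun']⟩, ?_⟩
      rw [hfin]
      simp only [List.length_append, List.length_singleton]
      have : j ≤ w.length := hlen
      omega
end

section
/- Over the alphabet A = {0,1,2,3,4,5,6} with p = 4, the set Λ of normalized words that are proper prefixes of minimal squares of period at most 4 is exactly {ε, 0, 01, 010, 0102, 01020, 010201, 0102010, 012, 0120, 01201, 0121, 01210, 012101, 0121012, 0123, 01230, 012301, 0123012}. -/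
open scoped Classical

/-- `w` contains a factor that is a square of period between `lo` and `hi`. -/
def HasSq {A : Type*} (lo hi : ℕ) (w : List A) : Prop :=
  ∃ u : List A, lo ≤ u.length ∧ u.length ≤ hi ∧ (u ++ u) <:+: w

/-- `w` is a square of period between `lo` and `hi`. -/
def IsSq {A : Type*} (lo hi : ℕ) (w : List A) : Prop :=
  ∃ u : List A, lo ≤ u.length ∧ u.length ≤ hi ∧ w = u ++ u

/-- `w` is a minimal square of period between `lo` and `hi`: it is such a square and no
proper factor of it is such a square. -/
def MinSq {A : Type*} (lo hi : ℕ) (w : List A) : Prop :=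
  IsSq lo hi w ∧ ∀ f : List A, f <:+: w → f ≠ w → ¬ IsSq lo hi f

/-- A word is normalized if it is lexicographically least among its images under
permutations of the alphabet. -/
def Normalized {A : Type*} [LinearOrder A] (w : List A) : Prop :=
  ∀ π : Equiv.Perm A, ¬ List.Lex (· < ·) (w.map π) w

/-- `Λ`: the set of normalized words that are proper prefixes of minimal squares of
period between `lo` and `hi`. -/
def Lam {A : Type*} [LinearOrder A] (lo hi : ℕ) : Set (List A) :=
  {w | Normalized w ∧ ∃ s : List A, MinSq lo hi s ∧ w <+: s ∧ w ≠ s}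

/-- `Λ(w)`: the longest element of `Λ` that is, up to a permutation of the alphabet,
a suffix of `w`. -/
noncomputable def lamOf {A : Type*} [LinearOrder A] (lo hi : ℕ) (w : List A) : List A :=
  if h : ∃ v : List A,
      (v ∈ Lam lo hi ∧ ∃ π : Equiv.Perm A, v.map π <:+ w) ∧
      ∀ v' : List A, (v' ∈ Lam lo hi ∧ ∃ π : Equiv.Perm A, v'.map π <:+ w) →
        v'.length ≤ v.length
  then h.choose else []

/-!
A word is normalized iff letters make their first appearance in increasing order without gaps
(restricted growth); this makes normalization decidable and closed under prefixes. If `w` is a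
proper prefix of a minimal square `uu` with `|u| ≤ 4`, then either `w` is a prefix of `u`, hence
square-free of length at most `4`, or `u` is a prefix of `w`, hence normalized. A finite
enumeration over normalized words of length at most `4` then shows that the normalized minimal
squares of period at most `4` are `00, 0101, 012012, 01020102, 01210121, 01230123`, and that `Λ`
consists exactly of their proper prefixes.
-/

variable {A : Type*}

section Normalization

variable [LinearOrder A]

/-- Each letter of the word is preceded, in the word or in `seen`, by all smaller letters. -/
def IsRestrictedGrowth : Finset A → List A → Prop
  | _, [] => True
  | seen, a :: t => (∀ b < a, b ∈ seen) ∧ IsRestrictedGrowth (insert a seen) t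

instance IsRestrictedGrowth.decidable [Fintype A] :
    ∀ (seen : Finset A) (w : List A), Decidable (IsRestrictedGrowth seen w)
  | _, [] => isTrue trivial
  | seen, a :: t =>
    haveI := IsRestrictedGrowth.decidable (insert a seen) t
    inferInstanceAs (Decidable (_ ∧ _))

theorem IsRestrictedGrowth.of_append {seen : Finset A} {v t : List A}
    (h : IsRestrictedGrowth seen (v ++ t)) : IsRestrictedGrowth seen v := by
  induction v generalizing seen with
  | nil => trivial
  | cons a v ih => exact ⟨h.1, ih h.2⟩

theorem not_lex_map_of_isRestrictedGrowth (π : Equiv.Perm A) {seen : Finset A} {w : List A}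
    (hfix : ∀ a ∈ seen, π a = a) (hw : IsRestrictedGrowth seen w) :
    ¬ List.Lex (· < ·) (w.map π) w := by
  induction w generalizing seen with
  | nil => simp
  | cons a t ih =>
    intro hlex
    rcases List.cons_lex_cons_iff.1 hlex with hlt | ⟨heq, hlex⟩
    · have hfa : π (π a) = π a := hfix _ (hw.1 _ hlt)
      exact hlt.ne (π.injective hfa)
    · refine ih (fun b hb => ?_) hw.2 hlex
      rcases Finset.mem_insert.1 hb with rfl | hb
      exacts [heq, hfix b hb]

theorem exists_lex_map_of_not_isRestrictedGrowth {seen : Finset A} {w : List A}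
    (hseen : ∀ a ∈ seen, ∀ b < a, b ∈ seen) (hw : ¬ IsRestrictedGrowth seen w) :
    ∃ π : Equiv.Perm A, (∀ a ∈ seen, π a = a) ∧ List.Lex (· < ·) (w.map π) w := by
  induction w generalizing seen with
  | nil => exact absurd trivial hw
  | cons a t ih =>
    by_cases hbelow : ∀ b < a, b ∈ seen
    · have hseen' : ∀ c ∈ insert a seen, ∀ b < c, b ∈ insert a seen := by
        intro c hc b hb
        rcases Finset.mem_insert.1 hc with rfl | hc
        exacts [Finset.mem_insert_of_mem (hbelow b hb),
          Finset.mem_insert_of_mem (hseen c hc b hb)]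
      obtain ⟨π, hfix, hlex⟩ := ih hseen' fun ht => hw ⟨hbelow, ht⟩
      refine ⟨π, fun b hb => hfix b (Finset.mem_insert_of_mem hb), ?_⟩
      rw [List.map_cons, hfix a (Finset.mem_insert_self a seen)]
      exact List.Lex.cons hlex
    · -- swapping `a` with a smaller unseen letter `b` decreases the word
      push Not at hbelow
      obtain ⟨b, hba, hb⟩ := hbelow
      have ha : a ∉ seen := fun ha => hb (hseen a ha b hba)
      refine ⟨Equiv.swap a b, fun c hc => ?_, ?_⟩
      · exact Equiv.swap_apply_of_ne_of_ne (by rintro rfl; exact ha hc)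
          (by rintro rfl; exact hb hc)
      · rw [List.map_cons, Equiv.swap_apply_left]
        exact List.Lex.rel hba

theorem normalized_iff_isRestrictedGrowth {w : List A} :
    Normalized w ↔ IsRestrictedGrowth ∅ w := by
  refine ⟨fun hw => by_contra fun hrg => ?_, fun hrg π => ?_⟩
  · obtain ⟨π, -, hlex⟩ := exists_lex_map_of_not_isRestrictedGrowth (by simp) hrg
    exact hw π hlex
  · exact not_lex_map_of_isRestrictedGrowth π (by simp) hrg

instance [Fintype A] (w : List A) : Decidable (Normalized w) :=
  decidable_of_iff _ normalized_iff_isRestrictedGrowth.symm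

theorem Normalized.of_prefix {v w : List A} (hw : Normalized w) (hv : v <+: w) :
    Normalized v := by
  obtain ⟨t, rfl⟩ := hv
  exact normalized_iff_isRestrictedGrowth.2
    (normalized_iff_isRestrictedGrowth.1 hw).of_append

end Normalization

section Squares

variable {lo hi : ℕ}

theorem forall_infix_iff {P : List A → Prop} {w : List A} :
    (∀ f, f <:+: w → P f) ↔ ∀ t ∈ w.tails, ∀ f ∈ t.inits, P f := by
  simp only [List.mem_tails, List.mem_inits]
  exact ⟨fun h t ht f hf => h f (List.infix_iff_prefix_suffix.2 ⟨t, hf, ht⟩),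
    fun h f hf => let ⟨t, hft, ht⟩ := List.infix_iff_prefix_suffix.1 hf; h t ht f hft⟩

theorem isSq_iff {w : List A} :
    IsSq lo hi w ↔ lo ≤ w.length / 2 ∧ w.length / 2 ≤ hi ∧
      w = w.take (w.length / 2) ++ w.take (w.length / 2) := by
  constructor
  · rintro ⟨u, hlo, hhi, rfl⟩
    have hlen : (u ++ u).length / 2 = u.length := by simp; omega
    rw [hlen, List.take_left' rfl]
    exact ⟨hlo, hhi, rfl⟩
  · rintro ⟨hlo, hhi, hw⟩
    have hlen := List.length_take_of_le (Nat.div_le_self w.length 2) (l := w)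
    exact ⟨_, hlen.symm ▸ hlo, hlen.symm ▸ hhi, hw⟩

instance [DecidableEq A] (w : List A) : Decidable (IsSq lo hi w) :=
  decidable_of_iff _ isSq_iff.symm

theorem hasSq_iff_exists_infix {w : List A} : HasSq lo hi w ↔ ∃ f, f <:+: w ∧ IsSq lo hi f :=
  ⟨fun ⟨u, hlo, hhi, hu⟩ => ⟨u ++ u, hu, u, hlo, hhi, rfl⟩,
    fun ⟨_, hf, u, hlo, hhi, hfu⟩ => ⟨u, hlo, hhi, hfu ▸ hf⟩⟩

instance [DecidableEq A] (w : List A) : Decidable (HasSq lo hi w) :=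
  decidable_of_iff (¬ ∀ t ∈ w.tails, ∀ f ∈ t.inits, ¬ IsSq lo hi f) <| by
    rw [← forall_infix_iff, hasSq_iff_exists_infix]
    push Not
    rfl

instance [DecidableEq A] (w : List A) : Decidable (MinSq lo hi w) :=
  decidable_of_iff (IsSq lo hi w ∧ ∀ t ∈ w.tails, ∀ f ∈ t.inits, f ≠ w → ¬ IsSq lo hi f)
    (by rw [← forall_infix_iff]; rfl)

theorem not_hasSq_of_prefix_minSq {s w : List A} (hs : MinSq lo hi s) (hw : w <+: s)
    (hne : w ≠ s) : ¬ HasSq lo hi w := by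
  rw [hasSq_iff_exists_infix]
  rintro ⟨f, hf, hsq⟩
  refine hs.2 f (hf.trans hw.isInfix) (fun hfs => hne ?_) hsq
  exact hw.eq_of_length (le_antisymm hw.length_le (hfs ▸ hf.length_le))

theorem mem_lam_of_minSq [LinearOrder A] {s w : List A} (hs : MinSq lo hi s)
    (hn : Normalized s) (hw : w <+: s) (hne : w ≠ s) : w ∈ Lam lo hi :=
  ⟨hn.of_prefix hw, s, hs, hw, hne⟩

end Squares

theorem List.forall_of_length_le_four {P : List A → Prop} (h0 : P []) (h1 : ∀ a, P [a])
    (h2 : ∀ a b, P [a, b]) (h3 : ∀ a b c, P [a, b, c]) (h4 : ∀ a b c d, P [a, b, c, d]) :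
    ∀ w : List A, w.length ≤ 4 → P w
  | [], _ => h0
  | [a], _ => h1 a
  | [a, b], _ => h2 a b
  | [a, b, c], _ => h3 a b c
  | [a, b, c, d], _ => h4 a b c d
  | _ :: _ :: _ :: _ :: _ :: _, h => absurd h (by simp)

def normalizedMinSquares : List (List (Fin 7)) :=
  [[0, 0], [0, 1, 0, 1], [0, 1, 2, 0, 1, 2], [0, 1, 0, 2, 0, 1, 0, 2],
    [0, 1, 2, 1, 0, 1, 2, 1], [0, 1, 2, 3, 0, 1, 2, 3]]

theorem append_self_mem_normalizedMinSquares :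
    ∀ u : List (Fin 7), u.length ≤ 4 → Normalized u → MinSq 1 4 (u ++ u) →
      u ++ u ∈ normalizedMinSquares :=
  List.forall_of_length_le_four (by decide) (by decide) (by decide) (by decide) (by decide)

theorem exists_normalizedMinSquares_of_not_hasSq :
    ∀ w : List (Fin 7), w.length ≤ 4 → Normalized w → ¬ HasSq 1 4 w →
      ∃ s ∈ normalizedMinSquares, w <+: s ∧ w ≠ s :=
  List.forall_of_length_le_four (by decide) (by decide) (by decide) (by decide) (by decide)

theorem lam_eq_properPrefixes_normalizedMinSquares :
    Lam (A := Fin 7) 1 4 = {w | ∃ s ∈ normalizedMinSquares, w <+: s ∧ w ≠ s} := by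
  ext w
  constructor
  · rintro ⟨hw, s, hs, hws, hne⟩
    obtain ⟨u, -, hu, rfl⟩ := hs.1
    rcases List.prefix_or_prefix_of_prefix hws (List.prefix_append u u) with hwu | huw
    · exact exists_normalizedMinSquares_of_not_hasSq w (hwu.length_le.trans hu) hw
        (not_hasSq_of_prefix_minSq hs hws hne)
    · exact ⟨u ++ u, append_self_mem_normalizedMinSquares u hu (hw.of_prefix huw) hs, hws, hne⟩
  · rintro ⟨s, hs, hws, hne⟩
    have hmin : ∀ s ∈ normalizedMinSquares, MinSq 1 4 s ∧ Normalized s := by decide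
    exact mem_lam_of_minSq (hmin s hs).1 (hmin s hs).2 hws hne

/-- Over the alphabet `Fin 7` with `p = 4`, the set `Λ` of normalized proper prefixes of
minimal squares of period at most `4` is exactly the explicit 19-element set
`{ε, 0, 01, 010, 0102, 01020, 010201, 0102010, 012, 0120, 01201, 0121, 01210, 012101,
0121012, 0123, 01230, 012301, 0123012}`. -/
theorem stmt_11 :
    Lam (A := Fin 7) 1 4 =
      ({[], [0], [0, 1], [0, 1, 0], [0, 1, 0, 2], [0, 1, 0, 2, 0], [0, 1, 0, 2, 0, 1],
        [0, 1, 0, 2, 0, 1, 0], [0, 1, 2], [0, 1, 2, 0], [0, 1, 2, 0, 1], [0, 1, 2, 1],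
        [0, 1, 2, 1, 0], [0, 1, 2, 1, 0, 1], [0, 1, 2, 1, 0, 1, 2], [0, 1, 2, 3],
        [0, 1, 2, 3, 0], [0, 1, 2, 3, 0, 1], [0, 1, 2, 3, 0, 1, 2]} :
        Set (List (Fin 7))) := by
  let words : List (List (Fin 7)) :=
    [[], [0], [0, 1], [0, 1, 0], [0, 1, 0, 2], [0, 1, 0, 2, 0], [0, 1, 0, 2, 0, 1],
      [0, 1, 0, 2, 0, 1, 0], [0, 1, 2], [0, 1, 2, 0], [0, 1, 2, 0, 1], [0, 1, 2, 1],
      [0, 1, 2, 1, 0], [0, 1, 2, 1, 0, 1], [0, 1, 2, 1, 0, 1, 2], [0, 1, 2, 3],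
      [0, 1, 2, 3, 0], [0, 1, 2, 3, 0, 1], [0, 1, 2, 3, 0, 1, 2]]
  have hsub : ∀ s ∈ normalizedMinSquares, ∀ w ∈ s.inits, w ≠ s → w ∈ words := by decide
  have hsup : ∀ w ∈ words, ∃ s ∈ normalizedMinSquares, w <+: s ∧ w ≠ s := by decide
  rw [lam_eq_properPrefixes_normalizedMinSquares]
  ext w
  refine ⟨fun ⟨s, hs, hws, hne⟩ => ?_, fun hw => hsup w ?_⟩
  · simpa [words] using hsub s hs w (List.mem_inits _ _ |>.2 hws) hne
  · simpa [words] using hw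
end

section
/- For every word v ∈ S^{≤p}_free and every word u over A, the word vu belongs to S^{≤p}_free if and only if L(v)u belongs to S^{≤p}_free. -/
open scoped Classical

/-- `s` is a proper prefix of some minimal square of period between `2` and `p`. -/
def PrefMinSq {A : Type*} (p : ℕ) (s : List A) : Prop :=
  ∃ m : List A, MinSq 2 p m ∧ s <+: m ∧ s ≠ m

/-- `L(v)`: the longest suffix of `v` that is a proper prefix of some minimal square of
period between `2` and `p`. -/
noncomputable def LOf {A : Type*} (p : ℕ) (v : List A) : List A :=
  if h : ∃ s : List A, (s <:+ v ∧ PrefMinSq p s) ∧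
      ∀ s' : List A, (s' <:+ v ∧ PrefMinSq p s') → s'.length ≤ s.length
  then h.choose else []

/-- A maximal-length suffix with the `PrefMinSq` property exists as soon as some suffix
has it. -/
lemma exists_max_suffix {A : Type*} (p : ℕ) (v : List A)
    (hex : ∃ s : List A, s <:+ v ∧ PrefMinSq p s) :
    ∃ s : List A, (s <:+ v ∧ PrefMinSq p s) ∧
      ∀ s' : List A, (s' <:+ v ∧ PrefMinSq p s') → s'.length ≤ s.length := by
  classical
  set Q : ℕ → Prop := fun n => ∃ s : List A, s.length = n ∧ s <:+ v ∧ PrefMinSq p s with hQ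
  obtain ⟨s₀, hs₀v, hs₀⟩ := hex
  have hs₀len : s₀.length ≤ v.length := hs₀v.length_le
  have hq : Q s₀.length := ⟨s₀, rfl, hs₀v, hs₀⟩
  have hspec : Q (Nat.findGreatest Q v.length) := Nat.findGreatest_spec hs₀len hq
  obtain ⟨s, hslen, hsv, hsp⟩ := hspec
  refine ⟨s, ⟨hsv, hsp⟩, ?_⟩
  rintro s' ⟨hs'v, hs'⟩
  have : s'.length ≤ Nat.findGreatest Q v.length :=
    Nat.le_findGreatest hs'v.length_le ⟨s', rfl, hs'v, hs'⟩
  omega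

lemma LOf_suffix {A : Type*} (p : ℕ) (v : List A) : LOf p v <:+ v := by
  unfold LOf
  split
  · next h => exact h.choose_spec.1.1
  · exact List.nil_suffix

lemma LOf_max {A : Type*} (p : ℕ) (v : List A) {s : List A}
    (hsv : s <:+ v) (hs : PrefMinSq p s) : s.length ≤ (LOf p v).length := by
  unfold LOf
  split
  · next h => exact h.choose_spec.2 s ⟨hsv, hs⟩
  · next h => exact absurd (exists_max_suffix p v ⟨s, hsv, hs⟩) h

/-- Any word containing a square of period between `lo` and `hi` contains a minimal one. -/
lemma exists_minSq {A : Type*} {lo hi : ℕ} {w : List A} (h : HasSq lo hi w) :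
    ∃ m : List A, MinSq lo hi m ∧ m <:+: w := by
  classical
  obtain ⟨x, hx1, hx2, hxw⟩ := h
  set Q : ℕ → Prop := fun n => ∃ m : List A, m.length = n ∧ IsSq lo hi m ∧ m <:+: w with hQ
  have hq : Q (x ++ x).length := ⟨x ++ x, rfl, ⟨x, hx1, hx2, rfl⟩, hxw⟩
  have hex : ∃ n, Q n := ⟨_, hq⟩
  obtain ⟨m, hmlen, hmsq, hmw⟩ := Nat.find_spec hex
  refine ⟨m, ⟨hmsq, ?_⟩, hmw⟩
  intro f hfm hfne hfsq
  have hflt : f.length < m.length := by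
    have hle := hfm.length_le
    rcases lt_or_eq_of_le hle with h | h
    · exact h
    · exact absurd (hfm.eq_of_length h) hfne
  have : ¬ Q f.length := Nat.find_min hex (by omega)
  exact this ⟨f, rfl, hfsq, hfm.trans hmw⟩

/-- For every word `v` containing no square of period between `2` and `p` and every word
`u`, the word `v ++ u` contains no such square if and only if `L(v) ++ u` contains no
such square. -/
theorem stmt_16 (A : Type*) [Fintype A] (p : ℕ) (hp : 2 ≤ p)
    (v u : List A) (hv : ¬ HasSq 2 p v) :
    ¬ HasSq 2 p (v ++ u) ↔ ¬ HasSq 2 p (LOf p v ++ u) := by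
  constructor
  · -- contrapositive: a square in LOf p v ++ u gives one in v ++ u
    intro hA hB
    apply hA
    obtain ⟨x, hx1, hx2, hxw⟩ := hB
    obtain ⟨c, hc⟩ := LOf_suffix p v
    refine ⟨x, hx1, hx2, hxw.trans ?_⟩
    have hsfx : LOf p v ++ u <:+ v ++ u := ⟨c, by rw [← List.append_assoc, hc]⟩
    exact hsfx.isInfix
  · -- hard direction
    intro hB hA
    apply hB
    obtain ⟨m, hm, hminf⟩ := exists_minSq hA
    obtain ⟨x, hx1, hx2, hxeq⟩ := hm.1
    have hmlen : 4 ≤ m.length := by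
      rw [hxeq, List.length_append]; omega
    obtain ⟨l, r, heq⟩ := hminf
    -- show m <:+: LOf p v ++ u
    suffices hsuff : m <:+: LOf p v ++ u by
      exact ⟨x, hx1, hx2, hxeq ▸ hsuff⟩
    by_cases hcase : l.length + m.length ≤ v.length
    · -- m is inside v : contradiction
      exfalso
      apply hv
      have hlm : l ++ m <+: v := by
        apply List.prefix_of_prefix_length_le _ (List.prefix_append v u)
        · simpa using hcase
        · exact ⟨r, by rw [← heq]⟩
      obtain ⟨t, ht⟩ := hlm
      exact ⟨x, hx1, hx2, ⟨l, t, by rw [← ht, hxeq]⟩⟩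
    · by_cases hcase2 : v.length ≤ l.length
      · -- m is inside u
        have hlpre : v <+: l := by
          apply List.prefix_of_prefix_length_le (List.prefix_append v u) _ hcase2
          exact ⟨m ++ r, by rw [← heq]; simp⟩
        obtain ⟨l2, hl2⟩ := hlpre
        have hu : l2 ++ m ++ r = u := by
          have : v ++ (l2 ++ m ++ r) = v ++ u := by
            rw [← heq, ← hl2]; simp
          exact List.append_cancel_left this
        have hmu : m <:+: u := ⟨l2, r, hu⟩
        exact hmu.trans (List.suffix_append (LOf p v) u).isInfix
      · -- m straddles the boundary
        push_neg at hcase hcase2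
        have hlv : l <+: v := by
          apply List.prefix_of_prefix_length_le _ (List.prefix_append v u) (le_of_lt hcase2)
          exact ⟨m ++ r, by rw [← heq]; simp⟩
        obtain ⟨s, hs⟩ := hlv
        have hsu : s ++ u = m ++ r := by
          have : l ++ (s ++ u) = l ++ (m ++ r) := by
            rw [← List.append_assoc, hs, ← heq]; simp
          exact List.append_cancel_left this
        have hslen : s.length < m.length := by
          have : l.length + s.length = v.length := by
            rw [← hs]; simp
          omega
        have hsm : s <+: m := by
          apply List.prefix_of_prefix_length_le (l₃ := m ++ r)
          · exact ⟨u, hsu⟩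
          · exact List.prefix_append m r
          · omega
        obtain ⟨t, ht⟩ := hsm
        have htu : t ++ r = u := by
          have : s ++ (t ++ r) = s ++ u := by
            rw [← List.append_assoc, ht, hsu]
          exact List.append_cancel_left this
        have hsv : s <:+ v := ⟨l, hs⟩
        have hspre : PrefMinSq p s :=
          ⟨m, hm, ⟨t, ht⟩, fun h => by rw [h] at hslen; omega⟩
        have hsL : s <:+ LOf p v :=
          List.suffix_of_suffix_length_le hsv (LOf_suffix p v) (LOf_max p v hsv hspre)
        obtain ⟨c, hc⟩ := hsL
        refine ⟨c, r, ?_⟩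
        rw [← ht, ← htu, ← hc]
        simp
end
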